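/- For every r ≥ 0 and every starting point w⁰ ∈ ℝⁿ, the alternating projection sequence w^{k+1} = P_{B(r)}(P_M(w^k)) between the ℓ¹-ball B(r) = {z : ‖z‖₁ ≤ r} and the affine set M converges to a point z̄ ∈ B(r) with dist(z̄, M) = dist(B(r), M). (This makes Step 5 of the BP-MAP algorithm well defined: the limit in its definition always exists, since B(r) and M are polyhedral so their distance is attained.) -/

import Mathlib

open Filter Topology Metric

variable {F : Type*} [NormedAddCommGroup F] [InnerProductSpace ℝ F]

local notation "⟪" x ", " y "⟫" => @inner ℝ _ _ x y

lemma aux_var_ineq {C : Set F} (hC : Convex ℝ C) {u z : F} (hz : z ∈ C)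
    (hmin : ∀ p ∈ C, dist u z ≤ dist u p) : ∀ p ∈ C, ⟪u - z, p - z⟫ ≤ 0 := by
  haveI : Nonempty C := ⟨⟨z, hz⟩⟩
  refine (norm_eq_iInf_iff_real_inner_le_zero hC hz).1 ?_
  refine le_antisymm (le_ciInf fun p => by simpa [dist_eq_norm] using hmin p p.2) ?_
  have hbdd : BddBelow (Set.range fun w : C => ‖u - (w : F)‖) :=
    ⟨0, by rintro t ⟨p, rfl⟩; exact norm_nonneg _⟩
  exact ciInf_le hbdd ⟨z, hz⟩

lemma aux_firm {C : Set F} (hC : Convex ℝ C) {P : F → F}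
    (hP : ∀ u, P u ∈ C ∧ ∀ p ∈ C, dist u (P u) ≤ dist u p) (x y : F) :
    ‖(x - y) - (P x - P y)‖ ^ 2 ≤ ‖x - y‖ ^ 2 - ‖P x - P y‖ ^ 2 := by
  have h1 := aux_var_ineq hC (hP x).1 (hP x).2 (P y) (hP y).1
  have h2 := aux_var_ineq hC (hP y).1 (hP y).2 (P x) (hP x).1
  have h1' : (0:ℝ) ≤ ⟪x - P x, P x - P y⟫ := by
    have : P x - P y = -(P y - P x) := by abel
    rw [this, inner_neg_right]; linarith
  have hsum : (0:ℝ) ≤ ⟪(x - y) - (P x - P y), P x - P y⟫ := by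
    have : (x - y) - (P x - P y) = (x - P x) - (y - P y) := by abel
    rw [this, inner_sub_left]; linarith
  have hexp : ‖(x - y) - (P x - P y)‖ ^ 2
      = ‖x - y‖ ^ 2 - 2 * ⟪x - y, P x - P y⟫ + ‖P x - P y‖ ^ 2 :=
    norm_sub_sq_real _ _
  have hinner : ⟪(x - y) - (P x - P y), P x - P y⟫
      = ⟪x - y, P x - P y⟫ - ‖P x - P y‖ ^ 2 := by
    rw [inner_sub_left, real_inner_self_eq_norm_sq]
  linarith

lemma aux_nonexp {C : Set F} (hC : Convex ℝ C) {P : F → F}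
    (hP : ∀ u, P u ∈ C ∧ ∀ p ∈ C, dist u (P u) ≤ dist u p) (x y : F) :
    ‖P x - P y‖ ≤ ‖x - y‖ := by
  have h := aux_firm hC hP x y
  nlinarith [norm_nonneg ((x - y) - (P x - P y)), norm_nonneg (P x - P y), norm_nonneg (x - y),
    sq_nonneg (‖x - y‖ - ‖P x - P y‖), sq_nonneg (‖x - y‖ + ‖P x - P y‖)]

lemma aux_eq_case {C : Set F} (hC : Convex ℝ C) {P : F → F}
    (hP : ∀ u, P u ∈ C ∧ ∀ p ∈ C, dist u (P u) ≤ dist u p) (x y : F)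
    (h : ‖P x - P y‖ = ‖x - y‖) : P x - P y = x - y := by
  have hf := aux_firm hC hP x y
  rw [h] at hf
  have : ‖(x - y) - (P x - P y)‖ ^ 2 ≤ 0 := by linarith
  have hz : ‖(x - y) - (P x - P y)‖ = 0 := by
    nlinarith [norm_nonneg ((x - y) - (P x - P y))]
  exact (sub_eq_zero.1 (norm_eq_zero.1 hz)).symm

noncomputable def norm1 {n : ℕ} (x : EuclideanSpace ℝ (Fin n)) : ℝ := ∑ i, |x i|

lemma norm1_continuous {n : ℕ} : Continuous (norm1 (n := n)) := by
  unfold norm1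
  exact continuous_finset_sum _ fun i _ => (EuclideanSpace.proj (𝕜 := ℝ) i).continuous.abs

lemma norm_le_norm1 {n : ℕ} (p : EuclideanSpace ℝ (Fin n)) : ‖p‖ ≤ norm1 p := by
  rw [EuclideanSpace.norm_eq]
  have h1 : ∑ i, ‖p i‖ ^ 2 ≤ (∑ i, ‖p i‖) ^ 2 :=
    Finset.sum_sq_le_sq_sum_of_nonneg fun _ _ => norm_nonneg _
  calc Real.sqrt (∑ i, ‖p i‖ ^ 2) ≤ Real.sqrt ((∑ i, ‖p i‖) ^ 2) := Real.sqrt_le_sqrt h1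
    _ = ∑ i, ‖p i‖ := Real.sqrt_sq (Finset.sum_nonneg fun _ _ => norm_nonneg _)
    _ = norm1 p := by simp [norm1, Real.norm_eq_abs]

lemma norm1_convex {n : ℕ} (r : ℝ) :
    Convex ℝ {p : EuclideanSpace ℝ (Fin n) | norm1 p ≤ r} := by
  intro p hp q hq a b ha hb hab
  simp only [Set.mem_setOf_eq] at *
  unfold norm1 at *
  have : ∀ i, |(a • p + b • q : EuclideanSpace ℝ (Fin n)) i| ≤ a * |p i| + b * |q i| := by
    intro i
    have : (a • p + b • q : EuclideanSpace ℝ (Fin n)) i = a * p i + b * q i := by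
      simp [PiLp.add_apply, PiLp.smul_apply, smul_eq_mul]
    rw [this]
    calc |a * p i + b * q i| ≤ |a * p i| + |b * q i| := abs_add_le _ _
      _ = a * |p i| + b * |q i| := by rw [abs_mul, abs_mul, abs_of_nonneg ha, abs_of_nonneg hb]
  calc ∑ i, |(a • p + b • q : EuclideanSpace ℝ (Fin n)) i|
      ≤ ∑ i, (a * |p i| + b * |q i|) := Finset.sum_le_sum fun i _ => this i
    _ = a * ∑ i, |p i| + b * ∑ i, |q i| := by
        rw [Finset.sum_add_distrib, Finset.mul_sum, Finset.mul_sum]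
    _ ≤ a * r + b * r := by
        gcongr
    _ = r := by rw [← add_mul, hab, one_mul]

lemma solset_convex {n m : ℕ} (A : Matrix (Fin m) (Fin n) ℝ) (b : Fin m → ℝ) :
    Convex ℝ {x : EuclideanSpace ℝ (Fin n) | A.mulVec x = b} := by
  intro x hx y hy a c ha hc hac
  simp only [Set.mem_setOf_eq] at *
  have : A.mulVec (a • x + c • y : EuclideanSpace ℝ (Fin n))
      = a • A.mulVec x + c • A.mulVec y := by
    have hrw : (a • x + c • y : EuclideanSpace ℝ (Fin n))
        = (a • (x : Fin n → ℝ) + c • (y : Fin n → ℝ) : Fin n → ℝ) := rfl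
    rw [hrw, Matrix.mulVec_add, Matrix.mulVec_smul, Matrix.mulVec_smul]
  rw [this, hx, hy, ← add_smul, hac, one_smul]

set_option maxHeartbeats 1000000 in
/-- For every r ≥ 0 and every starting point, the alternating projection
sequence between B(r) and M converges to a point z̄ ∈ B(r) with
dist(z̄, M) = dist(B(r), M); hence Step 5 of BP-MAP is well defined. -/
theorem bpmap_inner_map_well_defined {n m : ℕ} (hn : 1 ≤ n)
    (A : Matrix (Fin m) (Fin n) ℝ) (b : Fin m → ℝ)
    (M : Set (EuclideanSpace ℝ (Fin n)))
    (hM : M = {x | A.mulVec (WithLp.ofLp x) = b})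
    (hMne : M.Nonempty)
    (r : ℝ) (hr : 0 ≤ r)
    (PB PM : EuclideanSpace ℝ (Fin n) → EuclideanSpace ℝ (Fin n))
    (hPB : ∀ u, norm1 (PB u) ≤ r ∧
      ∀ p : EuclideanSpace ℝ (Fin n), norm1 p ≤ r → dist u (PB u) ≤ dist u p)
    (hPM : ∀ u, PM u ∈ M ∧ ∀ p ∈ M, dist u (PM u) ≤ dist u p)
    (w : ℕ → EuclideanSpace ℝ (Fin n))
    (hw : ∀ k, w (k + 1) = PB (PM (w k))) :
    ∃ zbar : EuclideanSpace ℝ (Fin n),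
      Tendsto w atTop (𝓝 zbar) ∧ norm1 zbar ≤ r ∧
      Metric.infDist zbar M =
        sInf {t | ∃ u : EuclideanSpace ℝ (Fin n), norm1 u ≤ r ∧ ∃ y ∈ M, t = dist u y} := by
  classical
  set B : Set (EuclideanSpace ℝ (Fin n)) := {p : EuclideanSpace ℝ (Fin n) | norm1 p ≤ r}
    with hBdef
  have hBconv : Convex ℝ B := norm1_convex r
  have hMconv : Convex ℝ M := hM ▸ solset_convex A b
  have hPB' : ∀ u, PB u ∈ B ∧ ∀ p ∈ B, dist u (PB u) ≤ dist u p :=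
    fun u => ⟨(hPB u).1, fun p hp => (hPB u).2 p hp⟩
  set T : EuclideanSpace ℝ (Fin n) → EuclideanSpace ℝ (Fin n) := fun x => PB (PM x) with hTdef
  have hwT : ∀ k, w (k + 1) = T (w k) := hw
  have hPBne : ∀ x y, ‖PB x - PB y‖ ≤ ‖x - y‖ := aux_nonexp hBconv hPB'
  have hPMne : ∀ x y, ‖PM x - PM y‖ ≤ ‖x - y‖ := aux_nonexp hMconv hPM
  have hTne : ∀ x y, ‖T x - T y‖ ≤ ‖x - y‖ :=
    fun x y => (hPBne (PM x) (PM y)).trans (hPMne x y)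
  have hTeq : ∀ x y, ‖T x - T y‖ = ‖x - y‖ → T x - T y = x - y := by
    intro x y h
    have h2 : ‖x - y‖ ≤ ‖PM x - PM y‖ := h ▸ hPBne (PM x) (PM y)
    have e1 : ‖PM x - PM y‖ = ‖x - y‖ := le_antisymm (hPMne x y) h2
    have e2 : ‖PB (PM x) - PB (PM y)‖ = ‖PM x - PM y‖ := by
      rw [e1]; exact h
    have q1 : PM x - PM y = x - y := aux_eq_case hMconv hPM x y e1
    have q2 : PB (PM x) - PB (PM y) = PM x - PM y := aux_eq_case hBconv hPB' (PM x) (PM y) e2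
    rw [show T x - T y = PB (PM x) - PB (PM y) from rfl, q2, q1]
  have hTcont : Continuous T := by
    refine (LipschitzWith.of_dist_le_mul (K := 1) fun x y => ?_).continuous
    simpa [dist_eq_norm] using hTne x y
  -- membership of iterates in B
  have hwB : ∀ k, w (k + 1) ∈ B := fun k => by rw [hw k]; exact (hPB (PM (w k))).1
  -- B is closed and bounded
  have hBclosed : IsClosed B := isClosed_le norm1_continuous continuous_const
  have hBsub : B ⊆ Metric.closedBall (0 : EuclideanSpace ℝ (Fin n)) r := by
    intro p hp
    rw [Metric.mem_closedBall, dist_zero_right]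
    exact (norm_le_norm1 p).trans hp
  have hBbdd : Bornology.IsBounded B := (Metric.isBounded_closedBall).subset hBsub
  -- convergent subsequence
  obtain ⟨z, hzB', φ, hφ, hφt⟩ := tendsto_subseq_of_bounded hBbdd hwB
  have hzB : z ∈ B := hBclosed.closure_eq ▸ hzB'
  set ψ : ℕ → ℕ := fun j => φ j + 1 with hψdef
  have hψ : StrictMono ψ := fun a c h => Nat.add_lt_add_right (hφ h) 1
  have hψt : Tendsto (fun j => w (ψ j)) atTop (𝓝 z) := hφt
  -- the displacement function g
  set g : EuclideanSpace ℝ (Fin n) → ℝ := fun x => ‖T x - x‖ with hgdef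
  have hgcont : Continuous g := (hTcont.sub continuous_id).norm
  have hganti : Antitone fun k => g (w k) := by
    refine antitone_nat_of_succ_le fun k => ?_
    show ‖T (w (k + 1)) - w (k + 1)‖ ≤ ‖T (w k) - w k‖
    rw [hwT k]
    exact hTne (T (w k)) (w k)
  have hgbdd : BddBelow (Set.range fun k => g (w k)) :=
    ⟨0, by rintro t ⟨k, rfl⟩; exact norm_nonneg _⟩
  set c : ℝ := ⨅ k, g (w k) with hcdef
  have hgc : Tendsto (fun k => g (w k)) atTop (𝓝 c) := tendsto_atTop_ciInf hganti hgbdd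
  -- iterates of w
  have hiter : ∀ k mm : ℕ, w (k + mm) = T^[mm] (w k) := by
    intro k mm
    induction mm with
    | zero => simp
    | succ j ih =>
        rw [show k + (j + 1) = (k + j) + 1 from rfl, hwT (k + j), ih,
          Function.iterate_succ_apply']
  -- every iterate of z has displacement c
  have hcluster : ∀ mm : ℕ, g (T^[mm] z) = c := by
    intro mm
    have t1 : Tendsto (fun j => w (ψ j + mm)) atTop (𝓝 (T^[mm] z)) := by
      have heq : (fun j => w (ψ j + mm)) = fun j => T^[mm] (w (ψ j)) :=
        funext fun j => hiter (ψ j) mm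
      rw [heq]
      exact ((hTcont.iterate mm).tendsto z).comp hψt
    have hψatop : Tendsto (fun j => ψ j + mm) atTop atTop :=
      tendsto_atTop_mono (fun j => Nat.le_add_right (ψ j) mm) hψ.tendsto_atTop
    have t2 : Tendsto (fun j => g (w (ψ j + mm))) atTop (𝓝 c) := hgc.comp hψatop
    exact tendsto_nhds_unique ((hgcont.tendsto _).comp t1) t2
  -- constant displacement of successive iterates
  have hstep : ∀ mm : ℕ, T^[mm + 1] z - T^[mm] z = T z - z := by
    intro mm
    induction mm with
    | zero => simp
    | succ j ih =>
        have e : ‖T (T (T^[j] z)) - T (T^[j] z)‖ = ‖T (T^[j] z) - T^[j] z‖ := by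
          have e' : g (T^[j + 1] z) = g (T^[j] z) := by rw [hcluster, hcluster]
          simp only [hgdef, Function.iterate_succ_apply'] at e'
          exact e'
        have h2 := hTeq (T (T^[j] z)) (T^[j] z) e
        calc T^[j + 1 + 1] z - T^[j + 1] z
            = T (T (T^[j] z)) - T (T^[j] z) := by
              simp only [Function.iterate_succ_apply']
          _ = T (T^[j] z) - T^[j] z := h2
          _ = T^[j + 1] z - T^[j] z := by rw [Function.iterate_succ_apply']
          _ = T z - z := ih
  have hlin : ∀ mm : ℕ, T^[mm] z = z + mm • (T z - z) := by
    intro mm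
    induction mm with
    | zero => simp
    | succ j ih =>
        have := hstep j
        have h2 : T^[j + 1] z = T^[j] z + (T z - z) := by
          rw [← this]; abel
        rw [h2, ih, succ_nsmul]; abel
  -- the displacement vector is zero
  have hfix : T z = z := by
    have hmemB : ∀ mm : ℕ, T^[mm + 1] z ∈ B := by
      intro mm
      rw [Function.iterate_succ_apply']
      exact (hPB (PM (T^[mm] z))).1
    have hbound : ∀ mm : ℕ, ((mm : ℝ) + 1) * ‖T z - z‖ ≤ r + ‖z‖ := by
      intro mm
      have h1 := hmemB mm
      have h2 : ‖T^[mm + 1] z‖ ≤ r := (norm_le_norm1 _).trans h1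
      rw [hlin (mm + 1)] at h2
      have h3 : ‖(mm + 1) • (T z - z)‖ ≤ ‖z + (mm + 1) • (T z - z)‖ + ‖z‖ := by
        calc ‖(mm + 1) • (T z - z)‖ = ‖(z + (mm + 1) • (T z - z)) - z‖ := by
              congr 1; abel
          _ ≤ ‖z + (mm + 1) • (T z - z)‖ + ‖z‖ := norm_sub_le _ _
      have h4 : ‖(mm + 1) • (T z - z)‖ = ((mm : ℝ) + 1) * ‖T z - z‖ := by
        rw [← Nat.cast_smul_eq_nsmul ℝ, norm_smul, Real.norm_natCast]
        push_cast
        ring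
      linarith
    by_contra hne
    have hvpos : 0 < ‖T z - z‖ := by
      rw [norm_pos_iff, sub_ne_zero]; exact hne
    obtain ⟨mm, hmm⟩ := exists_nat_gt ((r + ‖z‖) / ‖T z - z‖)
    have := hbound mm
    rw [div_lt_iff₀ hvpos] at hmm
    nlinarith [hvpos]
  -- Fejer monotone convergence to z
  have hdanti : Antitone fun k => dist (w k) z := by
    refine antitone_nat_of_succ_le fun k => ?_
    have he : dist (w (k + 1)) z = ‖T (w k) - T z‖ := by rw [hwT k, hfix, dist_eq_norm]
    rw [he, dist_eq_norm]
    exact hTne (w k) z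
  have hdbdd : BddBelow (Set.range fun k => dist (w k) z) :=
    ⟨0, by rintro t ⟨k, rfl⟩; exact dist_nonneg⟩
  have hdc : Tendsto (fun k => dist (w k) z) atTop (𝓝 (⨅ k, dist (w k) z)) :=
    tendsto_atTop_ciInf hdanti hdbdd
  have hsub0 : Tendsto (fun j => dist (w (ψ j)) z) atTop (𝓝 0) := by
    have h := hψt
    rw [tendsto_iff_dist_tendsto_zero] at h
    exact h
  have hsubc : Tendsto (fun j => dist (w (ψ j)) z) atTop (𝓝 (⨅ k, dist (w k) z)) :=
    hdc.comp hψ.tendsto_atTop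
  have hiz : (⨅ k, dist (w k) z) = 0 := tendsto_nhds_unique hsubc hsub0
  have hwz : Tendsto w atTop (𝓝 z) := by
    rw [tendsto_iff_dist_tendsto_zero]
    rwa [hiz] at hdc
  refine ⟨z, hwz, hzB, ?_⟩
  -- the limit attains the distance between B and M
  have hq : PM z ∈ M := (hPM z).1
  have hzPBq : PB (PM z) = z := hfix
  have hinf : Metric.infDist z M = dist z (PM z) := by
    refine le_antisymm (Metric.infDist_le_dist_of_mem hq) ?_
    rw [Metric.infDist_eq_iInf]
    haveI : Nonempty M := hMne.to_subtype
    exact le_ciInf fun y => (hPM z).2 y y.2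
  have hkey : ∀ u : EuclideanSpace ℝ (Fin n), norm1 u ≤ r →
      ∀ y ∈ M, dist z (PM z) ≤ dist u y := by
    intro u hu y hy
    have h_a' := aux_var_ineq hBconv (hPB' (PM z)).1 (hPB' (PM z)).2 u hu
    rw [hzPBq] at h_a'
    have h_c' := aux_var_ineq hMconv hq (hPM z).2 y hy
    rw [dist_eq_norm, dist_eq_norm]
    set q := PM z with hqdef
    have hi1 : (0 : ℝ) ≤ ⟪u - z, z - q⟫ := by
      have he : ⟪u - z, z - q⟫ = -⟪q - z, u - z⟫ := by
        rw [show z - q = -(q - z) by abel, inner_neg_right, real_inner_comm]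
      rw [he]
      linarith [h_a']
    have hi2 : (0 : ℝ) ≤ ⟪q - y, z - q⟫ := by
      have he : ⟪q - y, z - q⟫ = -⟪z - q, y - q⟫ := by
        rw [show q - y = -(y - q) by abel, inner_neg_left, real_inner_comm]
      rw [he]
      linarith [h_c']
    have hdecomp : u - y = ((u - z) + (q - y)) + (z - q) := by abel
    have hexp : ‖u - y‖ ^ 2
        = ‖(u - z) + (q - y)‖ ^ 2 + 2 * ⟪(u - z) + (q - y), z - q⟫ + ‖z - q‖ ^ 2 := by
      rw [hdecomp]; exact norm_add_sq_real _ _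
    have hadd : ⟪(u - z) + (q - y), z - q⟫ = ⟪u - z, z - q⟫ + ⟪q - y, z - q⟫ :=
      inner_add_left _ _ _
    have hsq : ‖z - q‖ ^ 2 ≤ ‖u - y‖ ^ 2 := by
      rw [hexp, hadd]
      nlinarith [sq_nonneg ‖(u - z) + (q - y)‖]
    nlinarith [norm_nonneg (z - q), norm_nonneg (u - y)]
  have hmemS : dist z (PM z) ∈
      {t | ∃ u : EuclideanSpace ℝ (Fin n), norm1 u ≤ r ∧ ∃ y ∈ M, t = dist u y} :=
    ⟨z, hzB, PM z, hq, rfl⟩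
  have hSbdd : BddBelow {t | ∃ u : EuclideanSpace ℝ (Fin n), norm1 u ≤ r ∧ ∃ y ∈ M, t = dist u y} :=
    ⟨0, by rintro t ⟨u, hu, y, hy, rfl⟩; exact dist_nonneg⟩
  have hSlb : ∀ t ∈ {t | ∃ u : EuclideanSpace ℝ (Fin n), norm1 u ≤ r ∧ ∃ y ∈ M, t = dist u y},
      dist z (PM z) ≤ t := by
    rintro t ⟨u, hu, y, hy, rfl⟩
    exact hkey u hu y hy
  rw [hinf]
  exact le_antisymm (le_csInf ⟨_, hmemS⟩ hSlb) (csInf_le hSbdd hmemS)
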